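/- arXiv:2602.05494 — 4 statements merged into one kernel-verified Lean document; each statement's English description precedes it below -/
import Mathlib

section
/- Let l, u, A ∈ ℝ with l < 1 < u. Define F : ℝ → ℝ by F(w) = min(w·A, (max l (min w u))·A) (the ratio-clipped PPO surrogate with clipping range [l,u]) and G : ℝ → ℝ by G(w) = min(w·A, (if l ≤ w ∧ w ≤ u then w else 1)·A) (the general-clipping surrogate that reverts to the old-policy ratio value 1 when the constraint l ≤ w ≤ u fails). Then for every w ∈ ℝ with w ≠ l and w ≠ u, both F and G are differentiable at w and their derivatives at w are equal. -/
/-! Away from `l` and `u`, on a neighbourhood of `w` both surrogates are either `x ↦ x * A`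
(inside the clipping range) or `x ↦ min (x * A) (c * A)` for a constant `c` lying on the same
side of `w` (`c = l` or `u` for `F`, `c = 1` for `G`); the derivative of the latter depends only
on the side of `w` on which `c` lies. -/

open Filter Topology

theorem hasDerivAt_min_mul_const_of_lt {w c : ℝ} (A : ℝ) (hwc : w < c) :
    HasDerivAt (fun x => min (x * A) (c * A)) (max A 0) w := by
  have hnear : ∀ᶠ x in 𝓝 w, x < c := eventually_lt_nhds hwc
  rcases le_or_gt 0 A with hA | hA
  · rw [max_eq_left hA]
    refine (hasDerivAt_mul_const A).congr_of_eventuallyEq ?_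
    filter_upwards [hnear] with x hx
    exact min_eq_left (mul_le_mul_of_nonneg_right hx.le hA)
  · rw [max_eq_right hA.le]
    refine (hasDerivAt_const w (c * A)).congr_of_eventuallyEq ?_
    filter_upwards [hnear] with x hx
    exact min_eq_right (mul_le_mul_of_nonpos_right hx.le hA.le)

theorem hasDerivAt_min_mul_const_of_gt {w c : ℝ} (A : ℝ) (hcw : c < w) :
    HasDerivAt (fun x => min (x * A) (c * A)) (min A 0) w := by
  have hnear : ∀ᶠ x in 𝓝 w, c < x := eventually_gt_nhds hcw
  rcases le_or_gt 0 A with hA | hA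
  · rw [min_eq_right hA]
    refine (hasDerivAt_const w (c * A)).congr_of_eventuallyEq ?_
    filter_upwards [hnear] with x hx
    exact min_eq_right (mul_le_mul_of_nonneg_right hx.le hA)
  · rw [min_eq_left hA.le]
    refine (hasDerivAt_mul_const A).congr_of_eventuallyEq ?_
    filter_upwards [hnear] with x hx
    exact min_eq_left (mul_le_mul_of_nonpos_right hx.le hA.le)

theorem differentiableAt_and_deriv_eq_of_hasDerivAt {F G : ℝ → ℝ} {d w : ℝ}
    (hF : HasDerivAt F d w) (hG : HasDerivAt G d w) :
    DifferentiableAt ℝ F w ∧ DifferentiableAt ℝ G w ∧ deriv F w = deriv G w :=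
  ⟨hF.differentiableAt, hG.differentiableAt, hF.deriv.trans hG.deriv.symm⟩

/-- Gradient equivalence of the ratio-clipped PPO surrogate and the
general-clipping surrogate (pointwise, per-sample form). -/
theorem gradient_equivalence (l u A : ℝ) (hl : l < 1) (hu : 1 < u)
    (F G : ℝ → ℝ)
    (hF : F = fun w => min (w * A) ((max l (min w u)) * A))
    (hG : G = fun w => min (w * A) ((if l ≤ w ∧ w ≤ u then w else 1) * A)) :
    ∀ w : ℝ, w ≠ l → w ≠ u →
      DifferentiableAt ℝ F w ∧ DifferentiableAt ℝ G w ∧ deriv F w = deriv G w := by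
  subst hF hG
  intro w hwl hwu
  have hlu : l < u := hl.trans hu
  rcases hwl.lt_or_gt with hw | hlw
  · refine differentiableAt_and_deriv_eq_of_hasDerivAt
      ((hasDerivAt_min_mul_const_of_lt A hw).congr_of_eventuallyEq ?_)
      ((hasDerivAt_min_mul_const_of_lt A (hw.trans hl)).congr_of_eventuallyEq ?_) <;>
    filter_upwards [eventually_lt_nhds hw] with x hx
    · rw [min_eq_left (hx.trans hlu).le, max_eq_left hx.le]
    · rw [if_neg fun h => hx.not_ge h.1]
  rcases hwu.lt_or_gt with hwu | huw
  · refine differentiableAt_and_deriv_eq_of_hasDerivAt (d := A)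
      ((hasDerivAt_mul_const A).congr_of_eventuallyEq ?_)
      ((hasDerivAt_mul_const A).congr_of_eventuallyEq ?_) <;>
    filter_upwards [eventually_gt_nhds hlw, eventually_lt_nhds hwu] with x hlx hxu
    · rw [min_eq_left hxu.le, max_eq_right hlx.le, min_self]
    · rw [if_pos ⟨hlx.le, hxu.le⟩, min_self]
  · refine differentiableAt_and_deriv_eq_of_hasDerivAt
      ((hasDerivAt_min_mul_const_of_gt A huw).congr_of_eventuallyEq ?_)
      ((hasDerivAt_min_mul_const_of_gt A (hu.trans huw)).congr_of_eventuallyEq ?_) <;>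
    filter_upwards [eventually_gt_nhds huw] with x hx
    · rw [min_eq_right hx.le, max_eq_right hlu.le]
    · rw [if_neg fun h => hx.not_ge h.2]
end

section
/- Define kl3 : ℝ → ℝ by kl3(x) = x − 1 − Real.log x. Let δ > 0 and let l, u ∈ ℝ satisfy 0 < l < 1 < u, kl3(l) = δ and kl3(u) = δ. Then for every x > 0, the constraint kl3(x) ≤ δ holds if and only if l ≤ x ≤ u. -/
noncomputable def kl3 (x : ℝ) : ℝ := x - 1 - Real.log x

/-! The function `kl3` is strictly decreasing on `(0, 1]` and strictly increasing on `[1, ∞)`,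
so its sublevel set `{kl3 ≤ δ}` is the interval between the two points where it equals `δ`.
Both monotonicity statements follow from `log t < t - 1` for `t ≠ 1`, applied to a ratio. -/

open Real Set

lemma kl3_sub_kl3 {x y : ℝ} (hx : 0 < x) (hy : 0 < y) : kl3 y - kl3 x = y - x - log (y / x) := by
  rw [kl3, kl3, log_div hy.ne' hx.ne']
  ring

lemma kl3_strictAntiOn : StrictAntiOn kl3 (Ioc 0 1) := by
  rintro x ⟨hx, -⟩ y ⟨hy, hy1⟩ hxy
  have hlog : log (x / y) < x / y - 1 :=
    log_lt_sub_one_of_pos (div_pos hx hy) (div_ne_one_of_ne hxy.ne)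
  have hdiff : y - x ≤ 1 - x / y := by
    rw [one_sub_div hy.ne', le_div_iff₀ hy]
    nlinarith
  rw [← sub_neg, kl3_sub_kl3 hx hy, ← inv_div, log_inv]
  linarith

lemma kl3_strictMonoOn : StrictMonoOn kl3 (Ici 1) := by
  rintro x hx1 y - hxy
  have hx : 0 < x := lt_of_lt_of_le one_pos hx1
  have hy : 0 < y := hx.trans hxy
  have hlog : log (y / x) < y / x - 1 :=
    log_lt_sub_one_of_pos (div_pos hy hx) (div_ne_one_of_ne hxy.ne')
  have hdiff : y / x - 1 ≤ y - x := by
    rw [div_sub_one hx.ne', div_le_iff₀ hx]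
    nlinarith [mem_Ici.mp hx1]
  rw [← sub_pos, kl3_sub_kl3 hx hy]
  linarith

theorem kl3_constraint_iff_clipping_general (δ l u : ℝ)
    (hl0 : 0 < l) (hl1 : l < 1) (hu : 1 < u)
    (hkl : kl3 l = δ) (hku : kl3 u = δ) :
    ∀ x : ℝ, 0 < x → (kl3 x ≤ δ ↔ l ≤ x ∧ x ≤ u) := by
  intro x hx
  rcases le_total x 1 with hx1 | hx1
  · have hxu : x ≤ u := hx1.trans hu.le
    rw [← hkl, kl3_strictAntiOn.le_iff_ge ⟨hx, hx1⟩ ⟨hl0, hl1.le⟩]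
    exact (and_iff_left hxu).symm
  · have hlx : l ≤ x := hl1.le.trans hx1
    rw [← hku, kl3_strictMonoOn.le_iff_le hx1 (mem_Ici.mpr hu.le)]
    exact (and_iff_right hlx).symm

/-- The KL3-based trust-region constraint is equivalent to ratio-based clipping
with ranges [l, u]. -/
theorem kl3_constraint_iff_clipping (δ l u : ℝ) (hδ : 0 < δ)
    (hl0 : 0 < l) (hl1 : l < 1) (hu : 1 < u)
    (hkl : kl3 l = δ) (hku : kl3 u = δ) :
    ∀ x : ℝ, 0 < x → (kl3 x ≤ δ ↔ l ≤ x ∧ x ≤ u) :=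
  kl3_constraint_iff_clipping_general δ l u hl0 hl1 hu hkl hku
end

section
/- Let α be a nonempty finite type, θ : α → ℝ, and g : α → ℝ. Define the softmax policy π_θ(b) = Real.exp(θ b) / ∑_{b'} Real.exp(θ b'). Then for every a ∈ α, the function t ↦ ∑_{a'} softmax(θ + t • Pi.single a 1)(a') · g(a') has derivative at t = 0 equal to π_θ(a) · (g(a) − ∑_{a'} π_θ(a') · g(a')). -/
open Finset

noncomputable def softmax {α : Type*} [Fintype α] (θ : α → ℝ) (b : α) : ℝ :=
  Real.exp (θ b) / ∑ b' : α, Real.exp (θ b')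

/-! Write `E_θ[g]` as the quotient `(∑ b, exp (θ b) * g b) / ∑ b, exp (θ b)` and apply the
quotient rule along the direction `v`: the derivative is the covariance of `v` and `g` under
`π_θ`. For `v = Pi.single a 1` this covariance is `π_θ(a) * (g a - E_θ[g])`. -/

section Softmax

variable {α : Type*} [Fintype α]

theorem sum_exp_pos [Nonempty α] (θ : α → ℝ) : 0 < ∑ b, Real.exp (θ b) :=
  sum_pos (fun _ _ => Real.exp_pos _) univ_nonempty

theorem sum_softmax_mul (θ g : α → ℝ) :
    ∑ b, softmax θ b * g b = (∑ b, Real.exp (θ b) * g b) / ∑ b, Real.exp (θ b) := by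
  simp only [softmax, sum_div, div_mul_eq_mul_div]

theorem hasDerivAt_sum_exp_mul (θ v g : α → ℝ) (t : ℝ) :
    HasDerivAt (fun s : ℝ => ∑ b, Real.exp ((θ + s • v) b) * g b)
      (∑ b, Real.exp ((θ + t • v) b) * v b * g b) t := by
  refine HasDerivAt.fun_sum fun b _ => ?_
  have hline : HasDerivAt (fun s : ℝ => (θ + s • v) b) (v b) t := by
    simpa using ((hasDerivAt_id t).mul_const (v b)).const_add (θ b)
  exact hline.exp.mul_const (g b)

theorem hasDerivAt_sum_softmax_mul [Nonempty α] (θ v g : α → ℝ) (t : ℝ) :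
    HasDerivAt (fun s : ℝ => ∑ b, softmax (θ + s • v) b * g b)
      (∑ b, softmax (θ + t • v) b * (v b * g b) -
        (∑ b, softmax (θ + t • v) b * v b) * ∑ b, softmax (θ + t • v) b * g b) t := by
  simp only [sum_softmax_mul]
  have hden : HasDerivAt (fun s : ℝ => ∑ b, Real.exp ((θ + s • v) b))
      (∑ b, Real.exp ((θ + t • v) b) * v b) t := by
    simpa only [Pi.one_apply, mul_one] using hasDerivAt_sum_exp_mul θ v 1 t
  have hN := (sum_exp_pos (θ + t • v)).ne'
  refine ((hasDerivAt_sum_exp_mul θ v g t).fun_div hden hN).congr_deriv ?_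
  field_simp

end Softmax

theorem softmax_expectation_partial_deriv_general {α : Type*} [Fintype α]
    [DecidableEq α] (θ : α → ℝ) (g : α → ℝ) (a : α) :
    HasDerivAt (fun t : ℝ => ∑ a' : α, softmax (θ + t • (Pi.single a 1 : α → ℝ)) a' * g a')
      (softmax θ a * (g a - ∑ a' : α, softmax θ a' * g a')) 0 := by
  have : Nonempty α := ⟨a⟩
  convert hasDerivAt_sum_softmax_mul θ (Pi.single a 1) g 0 using 1
  simp only [zero_smul, add_zero, Pi.single_apply, ite_mul, one_mul, zero_mul, mul_ite,
    mul_one, mul_zero, sum_ite_eq', mem_univ, if_true]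
  ring

/-- Gradient of the IS-weighted surrogate objective with respect to a single logit. -/
theorem softmax_expectation_partial_deriv {α : Type*} [Fintype α] [Nonempty α]
    [DecidableEq α] (θ : α → ℝ) (g : α → ℝ) (a : α) :
    HasDerivAt (fun t : ℝ => ∑ a' : α, softmax (θ + t • (Pi.single a 1 : α → ℝ)) a' * g a')
      (softmax θ a * (g a - ∑ a' : α, softmax θ a' * g a')) 0 :=
  softmax_expectation_partial_deriv_general θ g a
end

section
/- Let α be a nonempty finite type, θ : α → ℝ, g : α → ℝ, and η, d ∈ ℝ. Define the softmax policy π_θ(b) = Real.exp(θ b) / ∑_{b'} Real.exp(θ b'), the mean E_{π_θ}[g] = ∑_b π_θ(b)·g(b), the entropy H(φ) = −∑_b π_φ(b)·Real.log(π_φ(b)), and the logit-update difference Δθ : α → ℝ by Δθ(a) = −η·d·π_θ(a)·(g(a) − E_{π_θ}[g]). Then the function t ↦ H(θ + t • Δθ) has derivative at t = 0 equal to η·d·∑_a π_θ(a)² · (g(a) − E_{π_θ}[g]) · (Real.log(π_θ(a)) − E_{π_θ}[Real.log ∘ π_θ]). -/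
/-! Along a logit direction `v` the softmax moves at rate `π a * (v a - E_π v)`, and the entropy is
`∑ negMulLog (π a)` with `negMulLog' = -log - 1`. The constant `-1` is killed by
`∑ π a * (v a - E_π v) = 0`, so the directional derivative is `-Cov_π(v, log π)`; for
`Δθ = -η d π (g - E_π g)` this covariance is the stated `π²`-weighted sum. -/

open Finset

noncomputable def softmaxEntropy {α : Type*} [Fintype α] (θ : α → ℝ) : ℝ :=
  -∑ b : α, softmax θ b * Real.log (softmax θ b)

open Real

theorem sum_mul_mul_sub_sum_comm {ι : Type*} (s : Finset ι) (w f g : ι → ℝ) :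
    ∑ i ∈ s, w i * f i * (g i - ∑ j ∈ s, w j * g j) =
      ∑ i ∈ s, w i * g i * (f i - ∑ j ∈ s, w j * f j) := by
  have hswap : ∑ i ∈ s, w i * g i * f i = ∑ i ∈ s, w i * f i * g i :=
    sum_congr rfl fun i _ => mul_right_comm _ _ _
  simp only [mul_sub, sum_sub_distrib, ← sum_mul, hswap]
  ring

section Softmax

variable {α : Type*} [Fintype α]

theorem softmax_pos (θ : α → ℝ) (a : α) : 0 < softmax θ a :=
  div_pos (exp_pos _) (sum_pos (fun b _ => exp_pos (θ b)) ⟨a, mem_univ a⟩)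

theorem sum_softmax [Nonempty α] (θ : α → ℝ) : ∑ a, softmax θ a = 1 := by
  simp only [softmax, ← sum_div]
  exact div_self (sum_pos (fun b _ => exp_pos (θ b)) univ_nonempty).ne'

theorem sum_softmax_mul_sub_mean (θ f : α → ℝ) :
    ∑ a, softmax θ a * (f a - ∑ b, softmax θ b * f b) = 0 := by
  rcases isEmpty_or_nonempty α with hα | hα
  · simp
  simp only [mul_sub, sum_sub_distrib, ← sum_mul, sum_softmax, one_mul, sub_self]

theorem softmaxEntropy_eq_sum_negMulLog (θ : α → ℝ) :
    softmaxEntropy θ = ∑ a, negMulLog (softmax θ a) := by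
  simp only [softmaxEntropy, negMulLog, neg_mul, sum_neg_distrib]

theorem hasDerivAt_softmax_add_smul (θ v : α → ℝ) (a : α) :
    HasDerivAt (fun t : ℝ => softmax (θ + t • v) a)
      (softmax θ a * (v a - ∑ b, softmax θ b * v b)) 0 := by
  have hline : ∀ b, HasDerivAt (fun t : ℝ => exp (θ b + t * v b)) (exp (θ b) * v b) 0 := by
    intro b
    simpa using ((hasDerivAt_mul_const (x := 0) (v b)).const_add (θ b)).exp
  have hZ : (∑ b, exp (θ b)) ≠ 0 := (sum_pos (fun b _ => exp_pos (θ b)) ⟨a, mem_univ a⟩).ne'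
  have hquot := (hline a).fun_div (HasDerivAt.fun_sum fun b _ => hline b) (by simpa using hZ)
  simp only [zero_mul, add_zero] at hquot
  refine hquot.congr_deriv ?_
  simp only [softmax, div_mul_eq_mul_div, ← sum_div]
  field_simp

theorem hasDerivAt_softmaxEntropy_add_smul (θ v : α → ℝ) :
    HasDerivAt (fun t : ℝ => softmaxEntropy (θ + t • v))
      (-∑ a, softmax θ a * v a *
        (log (softmax θ a) - ∑ b, softmax θ b * log (softmax θ b))) 0 := by
  have hterm : ∀ a, HasDerivAt (fun t : ℝ => negMulLog (softmax (θ + t • v) a))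
      ((-log (softmax θ a) - 1) * (softmax θ a * (v a - ∑ b, softmax θ b * v b))) 0 :=
    fun a => (hasDerivAt_negMulLog (softmax_pos θ a).ne').comp_of_eq 0
      (hasDerivAt_softmax_add_smul θ v a) (by simp)
  simp only [softmaxEntropy_eq_sum_negMulLog]
  refine (HasDerivAt.fun_sum fun a _ => hterm a).congr_deriv ?_
  have hexpand : ∀ a, (-log (softmax θ a) - 1) * (softmax θ a * (v a - ∑ b, softmax θ b * v b)) =
      -(softmax θ a * log (softmax θ a) * (v a - ∑ b, softmax θ b * v b) +
        softmax θ a * (v a - ∑ b, softmax θ b * v b)) := fun a => by ring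
  rw [sum_congr rfl fun a _ => hexpand a, sum_neg_distrib, sum_add_distrib,
    sum_softmax_mul_sub_mean, add_zero, sum_mul_mul_sub_sum_comm]

end Softmax

theorem entropy_difference_general {α : Type*} [Fintype α] (θ : α → ℝ)
    (g : α → ℝ) (η d : ℝ) (Δθ : α → ℝ)
    (hΔθ : Δθ = fun a =>
      -η * d * softmax θ a * (g a - ∑ b : α, softmax θ b * g b)) :
    HasDerivAt (fun t : ℝ => softmaxEntropy (θ + t • Δθ))
      (η * d * ∑ a : α, (softmax θ a) ^ 2 * (g a - ∑ b : α, softmax θ b * g b) *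
        (Real.log (softmax θ a) - ∑ a' : α, softmax θ a' * Real.log (softmax θ a')))
      0 := by
  refine (hasDerivAt_softmaxEntropy_add_smul θ Δθ).congr_deriv ?_
  rw [mul_sum, ← sum_neg_distrib]
  refine sum_congr rfl fun a _ => ?_
  rw [hΔθ]
  ring

/-- Entropy Difference: the first-order entropy change along the logit-update
difference equals η·d times a π-weighted covariance-type sum between the
event-restricted advantage g and the log-likelihood log π_θ. -/
theorem entropy_difference {α : Type*} [Fintype α] [Nonempty α] (θ : α → ℝ)
    (g : α → ℝ) (η d : ℝ) (Δθ : α → ℝ)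
    (hΔθ : Δθ = fun a =>
      -η * d * softmax θ a * (g a - ∑ b : α, softmax θ b * g b)) :
    HasDerivAt (fun t : ℝ => softmaxEntropy (θ + t • Δθ))
      (η * d * ∑ a : α, (softmax θ a) ^ 2 * (g a - ∑ b : α, softmax θ b * g b) *
        (Real.log (softmax θ a) - ∑ a' : α, softmax θ a' * Real.log (softmax θ a')))
      0 :=
  entropy_difference_general θ g η d Δθ hΔθ
end
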